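/- With the same setup as the concatenation lemma (μ^{(1)} ⪯ λ^{(q)}_{N_1}(b^{(1)}), μ^{(2)} ⪯ λ^{(q)}_{N_2}(b^{(2)}), b the composed tuple), the quantity Δ is additive: Δ_b(μ^{(1)} ∪ μ^{(2)}) = Δ_{b^{(1)}}(μ^{(1)}) + Δ_{b^{(2)}}(μ^{(2)}), where Δ_b(μ) = Σ_j ((q(j−1)+b_j)² − μ_j²). -/

import Mathlib

/-- Dominance order on tuples: all tail sums of `μ` are at most those of `lam`. -/
def DominatedBy {k : ℕ} (μ lam : Fin k → ℕ) : Prop :=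
  ∀ i : Fin k, ∑ j ∈ Finset.Ici i, μ j ≤ ∑ j ∈ Finset.Ici i, lam j

/-! The first block of the concatenation is unchanged. In the second block the root entries and
the parts are shifted by the same `c = q N₁ + b₁_{N₁}`, which changes each square difference by
`2c(x_i − y_i)`; these cross terms sum to zero because `μ₂` has the size of its root partition. -/

theorem Finset.sum_add_sq_sub_add_sq_of_sum_eq {ι R : Type*} [CommRing R] (s : Finset ι)
    (c : R) (x y : ι → R) (h : ∑ i ∈ s, x i = ∑ i ∈ s, y i) :
    ∑ i ∈ s, ((c + x i) ^ 2 - (c + y i) ^ 2) = ∑ i ∈ s, (x i ^ 2 - y i ^ 2) := by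
  have hterm : ∀ i, (c + x i) ^ 2 - (c + y i) ^ 2 = (x i ^ 2 - y i ^ 2) + 2 * c * (x i - y i) :=
    fun i => by ring
  simp only [hterm, Finset.sum_add_distrib, ← Finset.mul_sum, Finset.sum_sub_distrib, h,
    sub_self, mul_zero, add_zero]

/-- The quantity `Δ_b(μ) = Σ_j ((q(j−1)+b_j)² − μ_j²)` is additive under
concatenation of partitions dominated by root partitions. -/
theorem delta_additive (q N₁ N₂ : ℕ) (hN₁ : 1 ≤ N₁)
    (b₁ : Fin N₁ → ℕ) (b₂ : Fin N₂ → ℕ)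
    (μ₁ : Fin N₁ → ℕ) (μ₂ : Fin N₂ → ℕ)
    (hsum₂ : ∑ j, μ₂ j = ∑ j : Fin N₂, (q * (j : ℕ) + b₂ j)) :
    ∑ j : Fin (N₁ + N₂),
        (((q * (j : ℕ) + Fin.append b₁ (fun i => b₁ ⟨N₁ - 1, by omega⟩ + b₂ i) j : ℕ) : ℤ) ^ 2
          - ((Fin.append μ₁ (fun i => q * N₁ + b₁ ⟨N₁ - 1, by omega⟩ + μ₂ i) j : ℕ) : ℤ) ^ 2) =
      (∑ j : Fin N₁, (((q * (j : ℕ) + b₁ j : ℕ) : ℤ) ^ 2 - ((μ₁ j : ℕ) : ℤ) ^ 2)) +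
        ∑ j : Fin N₂, (((q * (j : ℕ) + b₂ j : ℕ) : ℤ) ^ 2 - ((μ₂ j : ℕ) : ℤ) ^ 2) := by
  rw [Fin.sum_univ_add]
  simp only [Fin.append_left, Fin.append_right, Fin.val_castAdd, Fin.val_natAdd]
  congr 1
  have hsum : ∑ i : Fin N₂, ((q * (i : ℕ) + b₂ i : ℕ) : ℤ) = ∑ i : Fin N₂, ((μ₂ i : ℕ) : ℤ) := by
    exact_mod_cast hsum₂.symm
  rw [← Finset.sum_add_sq_sub_add_sq_of_sum_eq _
    ((q * N₁ + b₁ ⟨N₁ - 1, by omega⟩ : ℕ) : ℤ) _ _ hsum]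
  congr 1 with i
  push_cast
  ring
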